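/- arXiv:1207.3664 — 9 statements merged into one kernel-verified Lean document; each statement's English description precedes it below -/
import Mathlib

section
/- Let λ, μ > 0. Let p : [0,∞) → ℝ be continuously differentiable, nondecreasing, with p(0) = 0 and 0 ≤ p(t) ≤ 1 for all t, and set β(t) = μ·exp(−λ∫_0^t (1 − p(x)) dx). Assume the Volterra equation β(t) = p'(t) + ∫_0^t β(t−y) p'(y) dy holds for all t ≥ 0. Then β(t) ≤ μ − λ·p(t) for all t ≥ 0; in particular p(t) ≤ min(1, μ/λ) for all t ≥ 0. -/
/-!
Write `I t = ∫₀ᵗ (1 - p)`, so that `β = μ e^{-λ I}` solves `β' = -λ (1 - p) β` and is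
nonincreasing. Since `p' ≥ 0` and `∫₀ᵗ p' = p t`, the convolution term of the Volterra equation
is at least `β t · p t`, whence `p' ≤ (1 - p) β`. Then `β + λ p` has derivative
`λ (p' - (1 - p) β) ≤ 0`, so it never exceeds its initial value `β 0 + λ p 0 = μ`.
-/

open Set MeasureTheory intervalIntegral

theorem hasDerivWithinAt_integral_Ici {E : Type*} [NormedAddCommGroup E] [NormedSpace ℝ E]
    [CompleteSpace E] {f : ℝ → E} {a t : ℝ} (hf : ContinuousOn f (Ici a)) (ht : t ∈ Ici a) :
    HasDerivWithinAt (fun u => ∫ x in a..u, f x) (f t) (Ici a) t := by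
  have htIcc : t ∈ Icc a (t + 1) := ⟨ht, by linarith⟩
  have := Fact.mk htIcc -- gives the `FTCFilter` instance for `Icc a (t + 1)`
  have hfIcc : ContinuousOn f (Icc a (t + 1)) := hf.mono Icc_subset_Ici_self
  refine HasDerivWithinAt.mono_of_mem_nhdsWithin (t := Icc a (t + 1)) ?_ ?_
  · exact integral_hasDerivWithinAt_right
      ((hfIcc.mono (Icc_subset_Icc_right htIcc.2)).intervalIntegrable_of_Icc ht)
      (hfIcc.stronglyMeasurableAtFilter_nhdsWithin measurableSet_Icc t)
      (hfIcc.continuousWithinAt htIcc)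
  · rw [← Ici_inter_Iic]
    exact inter_mem_nhdsWithin _ (Iic_mem_nhds (lt_add_one t))

theorem antitoneOn_Ici_of_hasDerivWithinAt_nonpos {f f' : ℝ → ℝ} {a : ℝ}
    (hf : ∀ t ∈ Ici a, HasDerivWithinAt f (f' t) (Ici a) t) (hf' : ∀ t ∈ Ici a, f' t ≤ 0) :
    AntitoneOn f (Ici a) :=
  antitoneOn_of_hasDerivWithinAt_nonpos (convex_Ici a) (fun t ht => (hf t ht).continuousWithinAt)
    (fun t ht => (hf t (interior_subset ht)).mono interior_subset)
    (fun t ht => hf' t (interior_subset ht))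

theorem integral_eq_sub_of_hasDerivWithinAt_Ici {E : Type*} [NormedAddCommGroup E]
    [NormedSpace ℝ E] [CompleteSpace E] {f f' : ℝ → E} {a b : ℝ}
    (hf : ∀ t ∈ Ici a, HasDerivWithinAt f (f' t) (Ici a) t) (hf' : ContinuousOn f' (Ici a))
    (hab : a ≤ b) : ∫ y in a..b, f' y = f b - f a :=
  integral_eq_sub_of_hasDeriv_right_of_le hab
    (fun t ht => (hf t ht.1).continuousWithinAt.mono Icc_subset_Ici_self)
    (fun t ht => (hf t ht.1.le).mono (Ioi_subset_Ici ht.1.le))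
    ((hf'.mono Icc_subset_Ici_self).intervalIntegrable_of_Icc hab)

theorem hasDerivWithinAt_mul_exp_neg_mul_integral {q : ℝ → ℝ} {a c μ t : ℝ}
    (hq : ContinuousOn q (Ici a)) (ht : t ∈ Ici a) :
    HasDerivWithinAt (fun u => μ * Real.exp (-(c * ∫ x in a..u, q x)))
      (-(c * q t) * (μ * Real.exp (-(c * ∫ x in a..t, q x)))) (Ici a) t :=
  (((hasDerivWithinAt_integral_Ici hq ht).const_mul c).fun_neg.exp.const_mul μ).congr_deriv
    (by ring)

theorem antitoneOn_mul_exp_neg_mul_integral {q : ℝ → ℝ} {a c μ : ℝ} (hμ : 0 ≤ μ) (hc : 0 ≤ c)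
    (hq : ContinuousOn q (Ici a)) (hq_nonneg : ∀ t ∈ Ici a, 0 ≤ q t) :
    AntitoneOn (fun u => μ * Real.exp (-(c * ∫ x in a..u, q x))) (Ici a) :=
  antitoneOn_Ici_of_hasDerivWithinAt_nonpos
    (fun _ ht => hasDerivWithinAt_mul_exp_neg_mul_integral hq ht) fun t ht =>
      mul_nonpos_of_nonpos_of_nonneg (neg_nonpos.2 (mul_nonneg hc (hq_nonneg t ht)))
        (by positivity)

theorem mul_integral_le_integral_comp_sub_mul {g f : ℝ → ℝ} {t : ℝ} (ht : 0 ≤ t)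
    (hg : AntitoneOn g (Icc 0 t)) (hgc : ContinuousOn g (Icc 0 t))
    (hf : ∀ y ∈ Icc 0 t, 0 ≤ f y) (hfc : ContinuousOn f (Icc 0 t)) :
    g t * ∫ y in 0..t, f y ≤ ∫ y in 0..t, g (t - y) * f y := by
  have hreflect : MapsTo (fun y => t - y) (Icc 0 t) (Icc 0 t) :=
    fun y hy => ⟨sub_nonneg.2 hy.2, by linarith [hy.1]⟩
  have hconv : ContinuousOn (fun y => g (t - y) * f y) (Icc 0 t) :=
    (hgc.comp (continuous_sub_left t).continuousOn hreflect).mul hfc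
  rw [← intervalIntegral.integral_const_mul]
  refine integral_mono_on ht ((hfc.intervalIntegrable_of_Icc ht).const_mul _)
    (hconv.intervalIntegrable_of_Icc ht) fun y hy => ?_
  exact mul_le_mul_of_nonneg_right
    (hg (hreflect hy) ⟨ht, le_rfl⟩ (by linarith [hy.1])) (hf y hy)

/-- For a continuously differentiable, nondecreasing lifetime
distribution `p` on `[0,∞)` with `p 0 = 0`, `0 ≤ p ≤ 1`, with
`β t = μ * exp (-λ ∫_0^t (1 - p x) dx)` satisfying the Volterra equation
`β t = p' t + ∫_0^t β (t - y) p' y dy`, one has `β t ≤ μ - λ p t` for all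
`t ≥ 0`, and in particular `p t ≤ min 1 (μ/λ)`. -/
theorem stmt_2 (lam mu : ℝ) (hlam : 0 < lam) (hmu : 0 < mu)
    (p p' β : ℝ → ℝ)
    (hderiv : ∀ t ∈ Set.Ici (0 : ℝ), HasDerivWithinAt p (p' t) (Set.Ici 0) t)
    (hcont : ContinuousOn p' (Set.Ici 0))
    (hmono : MonotoneOn p (Set.Ici 0))
    (hp0 : p 0 = 0)
    (hbound : ∀ t ∈ Set.Ici (0 : ℝ), 0 ≤ p t ∧ p t ≤ 1)
    (hβ : ∀ t ∈ Set.Ici (0 : ℝ),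
      β t = mu * Real.exp (-(lam * ∫ x in (0 : ℝ)..t, (1 - p x))))
    (hvolterra : ∀ t ∈ Set.Ici (0 : ℝ),
      β t = p' t + ∫ y in (0 : ℝ)..t, β (t - y) * p' y) :
    (∀ t ∈ Set.Ici (0 : ℝ), β t ≤ mu - lam * p t) ∧
      ∀ t ∈ Set.Ici (0 : ℝ), p t ≤ min 1 (mu / lam) := by
  have hβ0 : β 0 = mu := by simp [hβ 0 self_mem_Ici]
  have hβ_nonneg : ∀ t ∈ Ici (0 : ℝ), 0 ≤ β t := fun t ht => by rw [hβ t ht]; positivity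
  have h1p : ContinuousOn (fun x => 1 - p x) (Ici 0) :=
    continuousOn_const.sub fun t ht => (hderiv t ht).continuousWithinAt
  have hβ' : ∀ t ∈ Ici (0 : ℝ), HasDerivWithinAt β (-(lam * (1 - p t)) * β t) (Ici 0) t :=
    fun t ht => by
      rw [hβ t ht]
      exact (hasDerivWithinAt_mul_exp_neg_mul_integral h1p ht).congr_of_mem hβ ht
  have hβ_anti : AntitoneOn β (Ici 0) :=
    (antitoneOn_mul_exp_neg_mul_integral hmu.le hlam.le h1p fun t ht =>
      sub_nonneg.2 (hbound t ht).2).congr fun t ht => (hβ t ht).symm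
  have hp'_nonneg : ∀ t ∈ Ici (0 : ℝ), 0 ≤ p' t := fun t ht =>
    (hderiv t ht).derivWithin (uniqueDiffOn_Ici 0 t ht) ▸ hmono.derivWithin_nonneg
  have hp'_le : ∀ t ∈ Ici (0 : ℝ), p' t ≤ (1 - p t) * β t := fun t ht => by
    have hconv := mul_integral_le_integral_comp_sub_mul ht (hβ_anti.mono Icc_subset_Ici_self)
      (fun y hy => (hβ' y hy.1).continuousWithinAt.mono Icc_subset_Ici_self)
      (fun y hy => hp'_nonneg y hy.1) (hcont.mono Icc_subset_Ici_self)
    rw [integral_eq_sub_of_hasDerivWithinAt_Ici hderiv hcont ht, hp0, sub_zero] at hconv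
    linarith [hvolterra t ht]
  have hsum_anti : AntitoneOn (fun t => β t + lam * p t) (Ici 0) :=
    antitoneOn_Ici_of_hasDerivWithinAt_nonpos
      (fun t ht => (hβ' t ht).add ((hderiv t ht).const_mul lam))
      fun t ht => by linarith [mul_le_mul_of_nonneg_left (hp'_le t ht) hlam.le]
  have hmain : ∀ t ∈ Ici (0 : ℝ), β t ≤ mu - lam * p t := fun t ht => by
    have := hsum_anti self_mem_Ici ht ht
    simp only [hβ0, hp0, mul_zero, add_zero] at this
    linarith
  refine ⟨hmain, fun t ht => le_min (hbound t ht).2 ?_⟩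
  rw [le_div_iff₀ hlam]
  linarith [hmain t ht, hβ_nonneg t ht]
end

section
/- Let λ, μ > 0 and ρ = λ/μ, and assume ρ > 1/e. Then there is no differentiable function ε : [0,∞) → ℝ with ε(0) = 0, ε' positive and nonincreasing with lim_{t→∞} ε'(t) = 0, satisfying ρ = ε'(t)/μ + ∫_0^t ε'(z)·exp(−ε(t−z)) dz for all t ≥ 0. Equivalently, any such solution ε of this equation has inf_{t ≥ 0} ε'(t) > 0. -/
/-!
Write `I(t) = ∫₀ᵗ ε'(z) e^{-ε(t-z)} dz` and split `I(2s)` at `s` and `2s - A`. On `[0, s]` the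
weight is at most `e^{-ε(s)}`, so that piece is at most `ε(s) e^{-ε(s)} ≤ 1/e`. On `[s, 2s - A]`
monotonicity of `ε'` bounds the integrand by the derivative of `z ↦ e^{-ε(2s-z)}`, so that piece is
at most `e^{-ε(A)} - e^{-ε(s)}`. On `[2s - A, 2s]` the integrand is at most `ε'(s)`. As `e^{-ε}` is
monotone and bounded, `e^{-ε(A)} - e^{-ε(s)}` is small for `A` large, and then `A ε'(s)` and
`ε'(2s)/μ` are small for `s` large, so `ρ ≤ 1/e`.
-/

open Set Filter Topology Real MeasureTheory intervalIntegral

lemma mul_exp_neg_le_inv_exp (x : ℝ) : x * exp (-x) ≤ (exp 1)⁻¹ := by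
  calc x * exp (-x) ≤ exp (x - 1) * exp (-x) := by
        gcongr; linarith [add_one_le_exp (x - 1)]
    _ = (exp 1)⁻¹ := by rw [← exp_add, ← exp_neg]; ring_nf

lemma exists_forall_sub_lt_of_bddBelow {α : Type*} {g : α → ℝ} {S : Set α} {η : ℝ}
    (hS : S.Nonempty) (hbdd : BddBelow (g '' S)) (hη : 0 < η) :
    ∃ A ∈ S, ∀ s ∈ S, g A - g s < η := by
  obtain ⟨_, ⟨A, hA, rfl⟩, hlt⟩ :=
    exists_lt_of_csInf_lt (hS.image g) (lt_add_of_pos_right (sInf (g '' S)) hη)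
  refine ⟨A, hA, fun s hs => ?_⟩
  have := csInf_le hbdd (mem_image_of_mem g hs)
  linarith

lemma tendsto_zero_of_antitoneOn_of_forall_exists_lt {f : ℝ → ℝ} (hf : AntitoneOn f (Ici 0))
    (hnn : ∀ t ∈ Ici (0 : ℝ), 0 ≤ f t) (hsmall : ∀ c, 0 < c → ∃ t ∈ Ici (0 : ℝ), f t < c) :
    Tendsto f atTop (𝓝 0) := by
  refine tendsto_order.2 ⟨fun a ha => ?_, fun c hc => ?_⟩
  · filter_upwards [eventually_ge_atTop 0] with t ht using ha.trans_le (hnn t ht)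
  · obtain ⟨t₀, ht₀, hlt⟩ := hsmall c hc
    filter_upwards [eventually_ge_atTop t₀] with t ht
      using (hf ht₀ (mem_Ici.2 (le_trans ht₀ ht)) ht).trans_lt hlt

section IntegralEquation

variable {ε ε' : ℝ → ℝ}

lemma continuousOn_of_hasDerivWithinAt_Ici
    (hd : ∀ t ∈ Ici (0 : ℝ), HasDerivWithinAt ε (ε' t) (Ici 0) t) : ContinuousOn ε (Ici 0) :=
  fun t ht => (hd t ht).continuousWithinAt

lemma hasDerivAt_of_hasDerivWithinAt_Ici
    (hd : ∀ t ∈ Ici (0 : ℝ), HasDerivWithinAt ε (ε' t) (Ici 0) t) {x : ℝ} (hx : 0 < x) :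
    HasDerivAt ε (ε' x) x :=
  (hd x hx.le).hasDerivAt (Ici_mem_nhds hx)

lemma monotoneOn_of_hasDerivWithinAt_Ici
    (hd : ∀ t ∈ Ici (0 : ℝ), HasDerivWithinAt ε (ε' t) (Ici 0) t)
    (hnn : ∀ t ∈ Ici (0 : ℝ), 0 ≤ ε' t) : MonotoneOn ε (Ici 0) := by
  refine monotoneOn_of_hasDerivWithinAt_nonneg (f' := ε') (convex_Ici 0)
    (continuousOn_of_hasDerivWithinAt_Ici hd) ?_ ?_ <;> rw [interior_Ici]
  · exact fun x hx => (hasDerivAt_of_hasDerivWithinAt_Ici hd hx).hasDerivWithinAt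
  · exact fun x hx => hnn x (mem_Ici.2 hx.le)

lemma intervalIntegrable_of_antitoneOn_Ici {f : ℝ → ℝ} (hf : AntitoneOn f (Ici 0)) {a b : ℝ}
    (ha : 0 ≤ a) (hab : a ≤ b) : IntervalIntegrable f volume a b :=
  (hf.mono fun _ hx => le_trans ha (uIcc_of_le hab ▸ hx).1).intervalIntegrable

lemma integral_eq_sub_of_hasDerivWithinAt_Ici_s4
    (hd : ∀ t ∈ Ici (0 : ℝ), HasDerivWithinAt ε (ε' t) (Ici 0) t) (hanti : AntitoneOn ε' (Ici 0))
    {a b : ℝ} (ha : 0 ≤ a) (hab : a ≤ b) : ∫ z in a..b, ε' z = ε b - ε a :=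
  integral_eq_sub_of_hasDerivAt_of_le hab
    ((continuousOn_of_hasDerivWithinAt_Ici hd).mono fun _ hx => le_trans ha hx.1)
    (fun _ hx => hasDerivAt_of_hasDerivWithinAt_Ici hd (ha.trans_lt hx.1))
    (intervalIntegrable_of_antitoneOn_Ici hanti ha hab)

lemma integral_mul_exp_neg_eq
    (hd : ∀ t ∈ Ici (0 : ℝ), HasDerivWithinAt ε (ε' t) (Ici 0) t) (hanti : AntitoneOn ε' (Ici 0))
    {a b : ℝ} (ha : 0 ≤ a) (hab : a ≤ b) :
    ∫ u in a..b, ε' u * exp (-ε u) = exp (-ε a) - exp (-ε b) := by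
  have hcont : ContinuousOn (fun u => exp (-ε u)) (Icc a b) :=
    ((continuousOn_of_hasDerivWithinAt_Ici hd).mono fun _ hx => le_trans ha hx.1).neg.rexp
  have hderiv : ∀ x ∈ Ioo a b, HasDerivAt (fun u => -exp (-ε u)) (ε' x * exp (-ε x)) x :=
    fun x hx => by
      simpa [mul_comm] using
        (hasDerivAt_of_hasDerivWithinAt_Ici hd (ha.trans_lt hx.1)).neg.exp.fun_neg
  rw [integral_eq_sub_of_hasDerivAt_of_le hab hcont.fun_neg hderiv
    ((intervalIntegrable_of_antitoneOn_Ici hanti ha hab).mul_continuousOn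
      (uIcc_of_le hab ▸ hcont))]
  ring

lemma intervalIntegrable_mul_exp_neg_sub
    (hd : ∀ t ∈ Ici (0 : ℝ), HasDerivWithinAt ε (ε' t) (Ici 0) t) (hanti : AntitoneOn ε' (Ici 0))
    {a b t : ℝ} (ha : 0 ≤ a) (hab : a ≤ b) (hbt : b ≤ t) :
    IntervalIntegrable (fun z => ε' z * exp (-ε (t - z))) volume a b := by
  refine (intervalIntegrable_of_antitoneOn_Ici hanti ha hab).mul_continuousOn ?_
  refine ((continuousOn_of_hasDerivWithinAt_Ici hd).comp (continuousOn_const.sub continuousOn_id)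
    fun z hz => ?_).neg.rexp
  rw [uIcc_of_le hab] at hz
  exact mem_Ici.2 (sub_nonneg.2 (hz.2.trans hbt))

lemma integral_mul_exp_neg_sub_le_head
    (hd : ∀ t ∈ Ici (0 : ℝ), HasDerivWithinAt ε (ε' t) (Ici 0) t) (h0 : ε 0 = 0)
    (hnn : ∀ t ∈ Ici (0 : ℝ), 0 ≤ ε' t) (hanti : AntitoneOn ε' (Ici 0))
    {s t : ℝ} (hs : 0 ≤ s) (hst : s ≤ t) :
    ∫ z in 0..s, ε' z * exp (-ε (t - z)) ≤ ε s * exp (-ε (t - s)) := by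
  have hmono := monotoneOn_of_hasDerivWithinAt_Ici hd hnn
  calc ∫ z in 0..s, ε' z * exp (-ε (t - z))
      ≤ ∫ z in 0..s, ε' z * exp (-ε (t - s)) := by
        refine integral_mono_on hs (intervalIntegrable_mul_exp_neg_sub hd hanti le_rfl hs hst)
          ((intervalIntegrable_of_antitoneOn_Ici hanti le_rfl hs).mul_const _) fun z hz => ?_
        refine mul_le_mul_of_nonneg_left ?_ (hnn z hz.1)
        gcongr
        exact hmono (mem_Ici.2 (by linarith)) (mem_Ici.2 (by linarith [hz.2])) (by linarith [hz.2])
    _ = ε s * exp (-ε (t - s)) := by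
        rw [intervalIntegral.integral_mul_const,
          integral_eq_sub_of_hasDerivWithinAt_Ici_s4 hd hanti le_rfl hs, h0, sub_zero]

-- On `[s, t - A]` with `t ≤ 2 s` we have `t - z ≤ z`, so `ε' z ≤ ε' (t - z)` and the integrand
-- becomes the exact derivative of `z ↦ exp (-ε (t - z))`.
lemma integral_mul_exp_neg_sub_le_middle
    (hd : ∀ t ∈ Ici (0 : ℝ), HasDerivWithinAt ε (ε' t) (Ici 0) t) (hanti : AntitoneOn ε' (Ici 0))
    {A s t : ℝ} (hA : 0 ≤ A) (hsA : s ≤ t - A) (hts : t ≤ 2 * s) :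
    ∫ z in s..t - A, ε' z * exp (-ε (t - z)) ≤ exp (-ε A) - exp (-ε (t - s)) := by
  have hts' : A ≤ t - s := by linarith
  have hint := intervalIntegrable_of_antitoneOn_Ici hanti hA hts'
  calc ∫ z in s..t - A, ε' z * exp (-ε (t - z))
      ≤ ∫ z in s..t - A, ε' (t - z) * exp (-ε (t - z)) := by
        refine integral_mono_on hsA
          (intervalIntegrable_mul_exp_neg_sub hd hanti (by linarith) hsA (by linarith)) ?_
          fun z hz => ?_
        · simpa using ((hint.mul_continuousOn ((continuousOn_of_hasDerivWithinAt_Ici hd).mono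
            fun _ hx => le_trans hA (uIcc_of_le hts' ▸ hx).1).neg.rexp).comp_sub_left t).symm
        · gcongr
          exact hanti (mem_Ici.2 (by linarith [hz.2])) (mem_Ici.2 (by linarith [hz.1]))
            (by linarith [hz.1])
    _ = exp (-ε A) - exp (-ε (t - s)) := by
        rw [intervalIntegral.integral_comp_sub_left (fun u => ε' u * exp (-ε u)), sub_sub_cancel,
          integral_mul_exp_neg_eq hd hanti hA hts']

lemma integral_mul_exp_neg_sub_le_tail
    (hd : ∀ t ∈ Ici (0 : ℝ), HasDerivWithinAt ε (ε' t) (Ici 0) t) (h0 : ε 0 = 0)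
    (hnn : ∀ t ∈ Ici (0 : ℝ), 0 ≤ ε' t) (hanti : AntitoneOn ε' (Ici 0))
    {A s t : ℝ} (hA : 0 ≤ A) (hs : 0 ≤ s) (hsA : s ≤ t - A) :
    ∫ z in t - A..t, ε' z * exp (-ε (t - z)) ≤ A * ε' s := by
  have hmono := monotoneOn_of_hasDerivWithinAt_Ici hd hnn
  calc ∫ z in t - A..t, ε' z * exp (-ε (t - z))
      ≤ ∫ _ in t - A..t, ε' s := by
        refine integral_mono_on (by linarith)
          (intervalIntegrable_mul_exp_neg_sub hd hanti (by linarith) (by linarith) le_rfl)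
          intervalIntegrable_const fun z hz => ?_
        have hz0 : z ∈ Ici 0 := mem_Ici.2 (by linarith [hz.1])
        have hexp : exp (-ε (t - z)) ≤ 1 := by
          rw [exp_le_one_iff, neg_nonpos, ← h0]
          exact hmono self_mem_Ici (mem_Ici.2 (by linarith [hz.2])) (by linarith [hz.2])
        calc ε' z * exp (-ε (t - z)) ≤ ε' z := mul_le_of_le_one_right (hnn z hz0) hexp
          _ ≤ ε' s := hanti hs hz0 (by linarith [hz.1])
    _ = A * ε' s := by simp

lemma integral_mul_exp_neg_two_mul_sub_le
    (hd : ∀ t ∈ Ici (0 : ℝ), HasDerivWithinAt ε (ε' t) (Ici 0) t) (h0 : ε 0 = 0)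
    (hnn : ∀ t ∈ Ici (0 : ℝ), 0 ≤ ε' t) (hanti : AntitoneOn ε' (Ici 0))
    {A s : ℝ} (hA : 0 ≤ A) (hAs : A ≤ s) :
    ∫ z in 0..2 * s, ε' z * exp (-ε (2 * s - z)) ≤
      (exp 1)⁻¹ + (exp (-ε A) - exp (-ε s)) + A * ε' s := by
  have hs : 0 ≤ s := hA.trans hAs
  have hint := fun a b (ha : 0 ≤ a) (hab : a ≤ b) (hb : b ≤ 2 * s) =>
    intervalIntegrable_mul_exp_neg_sub hd hanti ha hab hb
  rw [← integral_add_adjacent_intervals (b := s) (hint _ _ le_rfl hs (by linarith))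
      (hint _ _ hs (by linarith) le_rfl),
    ← integral_add_adjacent_intervals (b := 2 * s - A) (hint _ _ hs (by linarith) (by linarith))
      (hint _ _ (by linarith) (by linarith) le_rfl)]
  have head := integral_mul_exp_neg_sub_le_head hd h0 hnn hanti hs (by linarith : s ≤ 2 * s)
  have middle := integral_mul_exp_neg_sub_le_middle hd hanti hA (by linarith : s ≤ 2 * s - A)
    le_rfl
  have tail := integral_mul_exp_neg_sub_le_tail hd h0 hnn hanti hA hs (by linarith : s ≤ 2 * s - A)
  rw [show 2 * s - s = s by ring] at head middle
  linarith [mul_exp_neg_le_inv_exp (ε s)]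

lemma le_inv_exp_of_tendsto_zero {ρ μ : ℝ}
    (hd : ∀ t ∈ Ici (0 : ℝ), HasDerivWithinAt ε (ε' t) (Ici 0) t) (h0 : ε 0 = 0)
    (hnn : ∀ t ∈ Ici (0 : ℝ), 0 ≤ ε' t) (hanti : AntitoneOn ε' (Ici 0))
    (htend : Tendsto ε' atTop (𝓝 0))
    (heq : ∀ t ∈ Ici (0 : ℝ), ρ = ε' t / μ + ∫ z in (0 : ℝ)..t, ε' z * exp (-ε (t - z))) :
    ρ ≤ (exp 1)⁻¹ := by
  refine le_of_forall_pos_lt_add fun η hη => ?_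
  obtain ⟨A, hA, hgap⟩ := exists_forall_sub_lt_of_bddBelow (g := fun u => exp (-ε u))
    nonempty_Ici ⟨0, by rintro _ ⟨u, -, rfl⟩; positivity⟩ (half_pos hη)
  have hsmall : Tendsto (fun s => ε' (2 * s) / μ + A * ε' s) atTop (𝓝 0) := by
    simpa using ((htend.comp (tendsto_id.const_mul_atTop two_pos)).div_const μ).add
      (htend.const_mul A)
  obtain ⟨s, hs, hAs⟩ :=
    ((hsmall.eventually (gt_mem_nhds (half_pos hη))).and (eventually_ge_atTop A)).exists
  have hs0 : 0 ≤ s := le_trans hA hAs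
  have hρ := heq (2 * s) (mem_Ici.2 (by linarith))
  have hI := integral_mul_exp_neg_two_mul_sub_le hd h0 hnn hanti hA hAs
  have hAs_gap := hgap s hs0
  linarith

end IntegralEquation

theorem stmt_4_general (lam mu : ℝ)
    (hρ : (Real.exp 1)⁻¹ < lam / mu) :
    (¬ ∃ ε ε' : ℝ → ℝ,
      (∀ t ∈ Set.Ici (0 : ℝ), HasDerivWithinAt ε (ε' t) (Set.Ici 0) t) ∧
      ε 0 = 0 ∧
      (∀ t ∈ Set.Ici (0 : ℝ), 0 < ε' t) ∧
      AntitoneOn ε' (Set.Ici 0) ∧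
      Filter.Tendsto ε' Filter.atTop (nhds 0) ∧
      (∀ t ∈ Set.Ici (0 : ℝ),
        lam / mu = ε' t / mu + ∫ z in (0 : ℝ)..t, ε' z * Real.exp (-(ε (t - z))))) ∧
    ∀ ε ε' : ℝ → ℝ,
      (∀ t ∈ Set.Ici (0 : ℝ), HasDerivWithinAt ε (ε' t) (Set.Ici 0) t) →
      ε 0 = 0 →
      (∀ t ∈ Set.Ici (0 : ℝ), 0 < ε' t) →
      AntitoneOn ε' (Set.Ici 0) →
      (∀ t ∈ Set.Ici (0 : ℝ),
        lam / mu = ε' t / mu + ∫ z in (0 : ℝ)..t, ε' z * Real.exp (-(ε (t - z)))) →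
      ∃ c : ℝ, 0 < c ∧ ∀ t ∈ Set.Ici (0 : ℝ), c ≤ ε' t := by
  refine ⟨fun ⟨ε, ε', hd, h0, hpos, hanti, htend, heq⟩ => ?_, fun ε ε' hd h0 hpos hanti heq => ?_⟩
  · exact hρ.not_ge (le_inv_exp_of_tendsto_zero hd h0 (fun t ht => (hpos t ht).le) hanti htend heq)
  · by_contra! hsmall
    exact hρ.not_ge (le_inv_exp_of_tendsto_zero hd h0 (fun t ht => (hpos t ht).le) hanti
      (tendsto_zero_of_antitoneOn_of_forall_exists_lt hanti (fun t ht => (hpos t ht).le)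
        hsmall) heq)

/-- If `ρ = λ/μ > 1/e`, there is no differentiable `ε` on `[0,∞)`
with `ε 0 = 0`, `ε'` positive and nonincreasing with `ε' t → 0`, satisfying
`ρ = ε' t / μ + ∫_0^t ε' z * exp (-(ε (t-z))) dz` for all `t ≥ 0`; equivalently,
any such solution has `inf_{t ≥ 0} ε' t > 0`. -/
theorem stmt_4 (lam mu : ℝ) (hlam : 0 < lam) (hmu : 0 < mu)
    (hρ : (Real.exp 1)⁻¹ < lam / mu) :
    (¬ ∃ ε ε' : ℝ → ℝ,
      (∀ t ∈ Set.Ici (0 : ℝ), HasDerivWithinAt ε (ε' t) (Set.Ici 0) t) ∧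
      ε 0 = 0 ∧
      (∀ t ∈ Set.Ici (0 : ℝ), 0 < ε' t) ∧
      AntitoneOn ε' (Set.Ici 0) ∧
      Filter.Tendsto ε' Filter.atTop (nhds 0) ∧
      (∀ t ∈ Set.Ici (0 : ℝ),
        lam / mu = ε' t / mu + ∫ z in (0 : ℝ)..t, ε' z * Real.exp (-(ε (t - z))))) ∧
    ∀ ε ε' : ℝ → ℝ,
      (∀ t ∈ Set.Ici (0 : ℝ), HasDerivWithinAt ε (ε' t) (Set.Ici 0) t) →
      ε 0 = 0 →
      (∀ t ∈ Set.Ici (0 : ℝ), 0 < ε' t) →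
      AntitoneOn ε' (Set.Ici 0) →
      (∀ t ∈ Set.Ici (0 : ℝ),
        lam / mu = ε' t / mu + ∫ z in (0 : ℝ)..t, ε' z * Real.exp (-(ε (t - z)))) →
      ∃ c : ℝ, 0 < c ∧ ∀ t ∈ Set.Ici (0 : ℝ), c ≤ ε' t :=
  stmt_4_general lam mu hρ
end

section
/- For 0 < ρ ≤ 1/e let r(ρ) denote the smallest root in (0,1] of the equation r·e^{−r} = ρ. Then, as ρ → 1/e from below, 1 − r(ρ) is asymptotically equivalent to √(2(1 − ρe)); that is, lim_{ρ→(1/e)⁻} (1 − r(ρ))/√(2(1 − ρe)) = 1. Equivalently, the stationary mean volume E N = 1/(1−r(ρ)) satisfies E N ≈ 1/√(2(1−ρe)) as ρ → 1/e. -/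
open Real Filter Set

lemma expA_aux {s : ℝ} (h0 : 0 ≤ s) (h1 : s ≤ 1) :
    (1 - s) * Real.exp s ≤ 1 - s^2/2 := by
  have hb := Real.exp_bound' h0 h1 (n := 3) (by norm_num)
  simp only [Finset.sum_range_succ, Finset.sum_range_zero] at hb
  norm_num [Nat.factorial] at hb
  nlinarith [sq_nonneg s, pow_nonneg h0 3, pow_nonneg h0 4]

lemma expB_aux {s : ℝ} (h0 : 0 ≤ s) :
    1 - (1 - s) * Real.exp s ≤ s^2 * Real.exp s / 2 := by
  have hE := Real.sum_le_exp_of_nonneg h0 4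
  simp only [Finset.sum_range_succ, Finset.sum_range_zero] at hE
  norm_num [Nat.factorial] at hE
  nlinarith [sq_nonneg s, sq_nonneg (1 - s), Real.exp_pos s, pow_nonneg h0 3]

lemma fmono_aux : StrictMonoOn (fun x : ℝ => x * Real.exp (-x)) (Set.Icc 0 1) := by
  apply strictMonoOn_of_deriv_pos (convex_Icc 0 1)
  · fun_prop
  · intro x hx
    rw [interior_Icc] at hx
    have hd : HasDerivAt (fun x : ℝ => x * Real.exp (-x))
        (1 * Real.exp (-x) + x * (Real.exp (-x) * (-1))) x :=
      (hasDerivAt_id x).mul ((Real.hasDerivAt_exp (-x)).comp x ((hasDerivAt_id x).neg))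
    rw [hd.deriv]
    nlinarith [Real.exp_pos (-x), hx.1, hx.2]

/-- g(s) = s / √(2(1-(1-s)eˢ)) → 1 as s → 0⁺ -/
lemma g_tendsto_aux :
    Tendsto (fun s : ℝ => s / Real.sqrt (2 * (1 - (1 - s) * Real.exp s)))
      (nhdsWithin 0 (Set.Ioi 0)) (nhds 1) := by
  have hlow : Tendsto (fun s : ℝ => Real.exp (-(s/2)))
      (nhdsWithin 0 (Set.Ioi 0)) (nhds 1) := by
    have hc : Continuous fun s : ℝ => Real.exp (-(s/2)) := by fun_prop
    have h : Tendsto (fun s : ℝ => Real.exp (-(s/2))) (nhds 0) (nhds 1) := by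
      simpa using hc.tendsto 0
    exact h.mono_left nhdsWithin_le_nhds
  have hmem : Set.Ioo (0:ℝ) 1 ∈ nhdsWithin (0:ℝ) (Set.Ioi 0) :=
    Ioo_mem_nhdsGT_of_mem ⟨le_refl 0, one_pos⟩
  refine tendsto_of_tendsto_of_tendsto_of_le_of_le' hlow tendsto_const_nhds ?_ ?_
  · filter_upwards [hmem] with s hs
    have h0 : 0 < s := hs.1
    have h1 : s < 1 := hs.2
    have hA := expA_aux h0.le h1.le
    have hB := expB_aux h0.le
    have hh : s^2 ≤ 2 * (1 - (1 - s) * Real.exp s) := by nlinarith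
    have hhpos : 0 < 2 * (1 - (1 - s) * Real.exp s) := by nlinarith [sq_nonneg s]
    have hub : 2 * (1 - (1 - s) * Real.exp s) ≤ (s * Real.exp (s/2))^2 := by
      have : Real.exp (s/2) * Real.exp (s/2) = Real.exp s := by
        rw [← Real.exp_add]; ring_nf
      nlinarith [this]
    have hsq : Real.sqrt (2 * (1 - (1 - s) * Real.exp s)) ≤ s * Real.exp (s/2) := by
      calc Real.sqrt (2 * (1 - (1 - s) * Real.exp s)) ≤ Real.sqrt ((s * Real.exp (s/2))^2) :=
            Real.sqrt_le_sqrt hub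
        _ = s * Real.exp (s/2) := Real.sqrt_sq (by positivity)
    have hsqpos : 0 < Real.sqrt (2 * (1 - (1 - s) * Real.exp s)) := Real.sqrt_pos.2 hhpos
    have : Real.exp (-(s/2)) = s / (s * Real.exp (s/2)) := by
      rw [Real.exp_neg]; field_simp
    rw [this]
    exact div_le_div_of_nonneg_left h0.le hsqpos hsq
  · filter_upwards [hmem] with s hs
    have h0 : 0 < s := hs.1
    have h1 : s < 1 := hs.2
    have hA := expA_aux h0.le h1.le
    have hh : s^2 ≤ 2 * (1 - (1 - s) * Real.exp s) := by nlinarith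
    have hs' : s ≤ Real.sqrt (2 * (1 - (1 - s) * Real.exp s)) := by
      calc s = Real.sqrt (s^2) := (Real.sqrt_sq h0.le).symm
        _ ≤ _ := Real.sqrt_le_sqrt hh
    rw [div_le_one (lt_of_lt_of_le h0 hs')]
    exact hs'

/-- For `0 < ρ ≤ 1/e` let `r ρ` denote the smallest root in
`(0,1]` of `r e^{-r} = ρ`. Then, as `ρ → 1/e` from below,
`(1 - r ρ) / √(2 (1 - ρ e)) → 1`. -/
theorem stmt_10 (r : ℝ → ℝ)
    (hr : ∀ ρ : ℝ, 0 < ρ → ρ ≤ (Real.exp 1)⁻¹ →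
      0 < r ρ ∧ r ρ ≤ 1 ∧ r ρ * Real.exp (-(r ρ)) = ρ ∧
        ∀ r' : ℝ, 0 < r' → r' * Real.exp (-r') = ρ → r ρ ≤ r') :
    Filter.Tendsto (fun ρ : ℝ => (1 - r ρ) / Real.sqrt (2 * (1 - ρ * Real.exp 1)))
      (nhdsWithin (Real.exp 1)⁻¹ (Set.Iio (Real.exp 1)⁻¹)) (nhds 1) := by
  set c : ℝ := (Real.exp 1)⁻¹ with hcdef
  have hce : c = Real.exp (-1) := by rw [hcdef, Real.exp_neg]
  have hcpos : 0 < c := by rw [hce]; exact Real.exp_pos _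
  set l := nhdsWithin c (Set.Iio c) with hl
  have hmemc : Set.Ioo (0:ℝ) c ∈ l :=
    Ioo_mem_nhdsLT_of_mem ⟨hcpos, le_refl c⟩
  -- basic facts eventually
  have hfact : ∀ ρ ∈ Set.Ioo (0:ℝ) c,
      0 < r ρ ∧ r ρ < 1 ∧ r ρ * Real.exp (-(r ρ)) = ρ := by
    intro ρ hρ
    obtain ⟨h1, h2, h3, _⟩ := hr ρ hρ.1 hρ.2.le
    refine ⟨h1, lt_of_le_of_ne h2 ?_, h3⟩
    intro heq
    rw [heq] at h3
    simp only [one_mul] at h3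
    rw [← h3, ← hce] at hρ
    exact lt_irrefl _ hρ.2
  -- r tends to 1
  have hr1 : Tendsto r l (nhds 1) := by
    rw [tendsto_order]
    constructor
    · intro a ha
      by_cases ha0 : a < 0
      · filter_upwards [hmemc] with ρ hρ
        exact lt_trans ha0 (hfact ρ hρ).1
      · push_neg at ha0
        have haI : a ∈ Set.Icc (0:ℝ) 1 := ⟨ha0, ha.le⟩
        have hfa : a * Real.exp (-a) < c := by
          have := fmono_aux haI (Set.mem_Icc.2 ⟨zero_le_one, le_refl 1⟩) ha
          simpa [hce] using this
        have hmem2 : Set.Ioo (a * Real.exp (-a)) c ∈ l :=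
          Ioo_mem_nhdsLT_of_mem ⟨hfa, le_refl c⟩
        have hfapos : 0 ≤ a * Real.exp (-a) := by positivity
        filter_upwards [hmem2] with ρ hρ
        have hρ' : ρ ∈ Set.Ioo (0:ℝ) c := ⟨lt_of_le_of_lt hfapos hρ.1, hρ.2⟩
        obtain ⟨h1, h2, h3⟩ := hfact ρ hρ'
        by_contra hle
        push_neg at hle
        have := fmono_aux.monotoneOn ⟨h1.le, h2.le⟩ haI hle
        rw [h3] at this
        exact absurd hρ.1 (not_lt.2 this)
    · intro b hb
      filter_upwards [hmemc] with ρ hρ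
      exact lt_of_lt_of_le (hfact ρ hρ).2.1 hb.le
  -- s = 1 - r ρ tends to 0 within Ioi 0
  have hs : Tendsto (fun ρ => 1 - r ρ) l (nhdsWithin 0 (Set.Ioi 0)) := by
    rw [tendsto_nhdsWithin_iff]
    constructor
    · have := (tendsto_const_nhds (x := (1:ℝ)) (f := l)).sub hr1
      simpa using this
    · filter_upwards [hmemc] with ρ hρ
      exact Set.mem_Ioi.2 (by linarith [(hfact ρ hρ).2.1])
  have hcomp := g_tendsto_aux.comp hs
  refine hcomp.congr' ?_
  filter_upwards [hmemc] with ρ hρ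
  obtain ⟨h1, h2, h3⟩ := hfact ρ hρ
  have key : (1 - (1 - r ρ)) * Real.exp (1 - r ρ) = ρ * Real.exp 1 := by
    have hx : Real.exp (1 - r ρ) = Real.exp (-(r ρ)) * Real.exp 1 := by
      rw [← Real.exp_add]; congr 1; ring
    rw [hx]
    linear_combination Real.exp 1 * h3
  simp only [Function.comp_apply]
  rw [key]
end

section
/- Define the sequence (d_h) by d_0 = 1 and d_{h+1} = 1 − exp(−d_h) for h ≥ 0. Then 1/d_h = h/2 + O(log h) as h → ∞, and consequently d_h = 2/h + O(log h / h²); i.e., there exist C > 0 and H such that |d_h − 2/h| ≤ C·(log h)/h² for all h ≥ H. -/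
/-- Let `d 0 = 1` and `d (h+1) = 1 - exp (-(d h))`. Then
`1 / d h = h/2 + O(log h)` and consequently `d h = 2/h + O(log h / h²)`:
there are `C > 0` and `H` with `|d h - 2/h| ≤ C log h / h²` for `h ≥ H`. -/
theorem stmt_11 (d : ℕ → ℝ) (hd0 : d 0 = 1)
    (hrec : ∀ h, d (h + 1) = 1 - Real.exp (-(d h))) :
    (∃ C : ℝ, 0 < C ∧ ∃ H : ℕ, ∀ h : ℕ, H ≤ h →
      |1 / d h - (h : ℝ) / 2| ≤ C * Real.log h) ∧
      ∃ C : ℝ, 0 < C ∧ ∃ H : ℕ, ∀ h : ℕ, H ≤ h →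
        |d h - 2 / (h : ℝ)| ≤ C * Real.log h / (h : ℝ) ^ 2 := by
  have hpos : ∀ h, 0 < d h := by
    intro h
    induction h with
    | zero => rw [hd0]; norm_num
    | succ n ih =>
      rw [hrec]
      have h1 : Real.exp (-(d n)) < 1 := by
        rw [Real.exp_lt_one_iff]
        linarith
      linarith
  have hle1 : ∀ h, d h ≤ 1 := by
    intro h
    cases h with
    | zero => rw [hd0]
    | succ n =>
      rw [hrec]
      have := Real.exp_pos (-(d n))
      linarith
  -- Taylor bound for exp
  have hexp : ∀ x : ℝ, 0 < x → x ≤ 1 →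
      |Real.exp (-x) - (1 - x + x^2/2)| ≤ 2/9 * x^3 := by
    intro x hx0 hx1
    have h1 : |(-x)| ≤ 1 := by rw [abs_neg, abs_of_nonneg hx0.le]; exact hx1
    have h2 := Real.exp_bound h1 (n := 3) (by norm_num)
    have h3 : ∑ i ∈ Finset.range 3, (-x)^i / (Nat.factorial i) = 1 - x + x^2/2 := by
      simp [Finset.sum_range_succ, Nat.factorial]; ring
    rw [h3] at h2
    rw [abs_neg, abs_of_nonneg hx0.le] at h2
    calc |Real.exp (-x) - (1 - x + x^2/2)| ≤ x^3 * ((3:ℕ).succ / ((Nat.factorial 3) * 3)) := h2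
      _ = 2/9 * x^3 := by norm_num [Nat.factorial]; ring
  have hfb : ∀ h : ℕ, d h - (d h)^2/2 - 2/9*(d h)^3 ≤ d (h+1) ∧
      d (h+1) ≤ d h - (d h)^2/2 + 2/9*(d h)^3 := by
    intro h
    have := hexp (d h) (hpos h) (hle1 h)
    rw [abs_le] at this
    rw [hrec]
    constructor <;> linarith [this.1, this.2]
  have hcube : ∀ h : ℕ, (d h)^3 ≤ (d h)^2 := by
    intro h
    nlinarith [hpos h, hle1 h, sq_nonneg (d h)]
  have hmono : ∀ h, d (h+1) ≤ d h ∧ 5/18*(d h)^2 ≤ d h - d (h+1) := by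
    intro h
    obtain ⟨_, h2⟩ := hfb h
    have hx := hpos h
    have hx1 := hle1 h
    have hc := hcube h
    constructor
    · nlinarith [sq_nonneg (d h)]
    · nlinarith
  have hincl : ∀ h, 1/d h + 5/18 ≤ 1/d (h+1) := by
    intro h
    obtain ⟨hm, h5⟩ := hmono h
    have hp := hpos h
    have hp1 := hpos (h+1)
    have heq : 1/d (h+1) - 1/d h = (d h - d (h+1))/(d h * d (h+1)) := by
      rw [div_sub_div _ _ hp1.ne' hp.ne']
      ring
    have hge : 5/18 ≤ (d h - d (h+1))/(d h * d (h+1)) := by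
      rw [le_div_iff₀ (by positivity)]
      nlinarith
    linarith [heq ▸ hge]
  have hElow : ∀ h : ℕ, 1 + 5/18*(h:ℝ) ≤ 1/d h := by
    intro h
    induction h with
    | zero => simp [hd0]
    | succ n ih =>
      have := hincl n
      push_cast
      linarith
  have hdb : ∀ h : ℕ, d h * (5*(h:ℝ)+18) ≤ 18 := by
    intro h
    have hp := hpos h
    have hE := hElow h
    have h1 : d h * (1/d h) = 1 := mul_one_div_cancel (ne_of_gt hp)
    nlinarith [mul_le_mul_of_nonneg_left hE hp.le, Nat.cast_nonneg (α := ℝ) h]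
  -- key increment bound
  have hkey : ∀ h : ℕ, |1/d (h+1) - 1/d h - 1/2| ≤ 3 * d h := by
    intro h
    have hp := hpos h
    have hp1 := hpos (h+1)
    have h1 := hle1 h
    obtain ⟨hl, hu⟩ := hfb h
    have hy5 : 5/18 * d h ≤ d (h+1) := by nlinarith [sq_nonneg (d h), hcube h]
    have hden : (0:ℝ) < 2*(d h)*(d (h+1)) := by positivity
    have heq : 1/d (h+1) - 1/d h - 1/2 =
        (2*(d h) - 2*(d (h+1)) - (d h)*(d (h+1)))/(2*(d h)*(d (h+1))) := by
      field_simp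
    rw [heq, abs_div, abs_of_pos hden, div_le_iff₀ hden, abs_le]
    have hc := hcube h
    have hquart : (d h)^4 ≤ (d h)^3 := by nlinarith [hpos h, hle1 h, sq_nonneg (d h), mul_pos hp hp]
    constructor
    · nlinarith [mul_le_mul_of_nonneg_left hy5 (by positivity : (0:ℝ) ≤ 6 * (d h)^2),
        mul_le_mul_of_nonneg_left hl hp.le]
    · nlinarith [mul_le_mul_of_nonneg_left hy5 (by positivity : (0:ℝ) ≤ 6 * (d h)^2),
        mul_le_mul_of_nonneg_left hl hp.le]
  have hd3 : ∀ n : ℕ, 3 * d n ≤ 12/((n:ℝ)+2) := by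
    intro n
    rw [le_div_iff₀ (by positivity)]
    nlinarith [hdb n, hpos n, hle1 n, Nat.cast_nonneg (α := ℝ) n]
  have hlog : ∀ h : ℕ, |1/d h - 1 - (h:ℝ)/2| ≤ 12 * Real.log ((h:ℝ)+1) := by
    intro h
    induction h with
    | zero => simp [hd0]
    | succ n ih =>
      have hk := hkey n
      have hdn := hd3 n
      have hloggap : 1/((n:ℝ)+2) ≤ Real.log ((n:ℝ)+2) - Real.log ((n:ℝ)+1) := by
        have h1 : Real.log (((n:ℝ)+1)/((n:ℝ)+2)) ≤ ((n:ℝ)+1)/((n:ℝ)+2) - 1 :=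
          Real.log_le_sub_one_of_pos (by positivity)
        rw [Real.log_div (by positivity) (by positivity)] at h1
        have h2 : ((n:ℝ)+1)/((n:ℝ)+2) - 1 = -(1/((n:ℝ)+2)) := by
          field_simp
          norm_num
        rw [h2] at h1
        linarith
      have htri : |1/d (n+1) - 1 - ((n:ℝ)+1)/2| ≤
          |1/d (n+1) - 1/d n - 1/2| + |1/d n - 1 - (n:ℝ)/2| := by
        have : 1/d (n+1) - 1 - ((n:ℝ)+1)/2 =
            (1/d (n+1) - 1/d n - 1/2) + (1/d n - 1 - (n:ℝ)/2) := by ring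
        rw [this]
        exact abs_add_le _ _
      push_cast
      push_cast at htri
      have hcast : ((n:ℝ)+1+1) = (n:ℝ)+2 := by ring
      rw [hcast]
      have h12 : 12/((n:ℝ)+2) = 12*(1/((n:ℝ)+2)) := by ring
      linarith
  -- first statement
  have first : ∀ h : ℕ, 2 ≤ h → |1 / d h - (h : ℝ) / 2| ≤ 26 * Real.log h := by
    intro h hh
    have hh1 : (2:ℝ) ≤ (h:ℝ) := by exact_mod_cast hh
    have hlogh : Real.log 2 ≤ Real.log h := Real.log_le_log (by norm_num) hh1
    have hlog2 : (1:ℝ)/2 ≤ Real.log 2 := by linarith [Real.log_two_gt_d9]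
    have hup : Real.log ((h:ℝ)+1) ≤ 2 * Real.log h := by
      have : ((h:ℝ)+1) ≤ (h:ℝ)^2 := by nlinarith
      calc Real.log ((h:ℝ)+1) ≤ Real.log ((h:ℝ)^2) := Real.log_le_log (by positivity) this
        _ = 2 * Real.log h := by rw [Real.log_pow]; push_cast; ring
    have h12 := hlog h
    have htri : |1/d h - (h:ℝ)/2| ≤ |1/d h - 1 - (h:ℝ)/2| + 1 := by
      have : 1/d h - (h:ℝ)/2 = (1/d h - 1 - (h:ℝ)/2) + 1 := by ring
      rw [this]
      calc |(1/d h - 1 - (h:ℝ)/2) + 1| ≤ |1/d h - 1 - (h:ℝ)/2| + |(1:ℝ)| := abs_add_le _ _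
        _ = |1/d h - 1 - (h:ℝ)/2| + 1 := by norm_num
    linarith
  refine ⟨⟨26, by norm_num, 2, first⟩, 208, by norm_num, 2, ?_⟩
  intro h hh
  have hh1 : (2:ℝ) ≤ (h:ℝ) := by exact_mod_cast hh
  have hhp : (0:ℝ) < (h:ℝ) := by linarith
  have hp := hpos h
  have hE4 : (h:ℝ)/4 ≤ 1/d h := by
    have := hElow h
    linarith
  have hEpos : (0:ℝ) < 1/d h := by positivity
  have h26 := first h hh
  have hlogpos : 0 ≤ Real.log h := Real.log_nonneg (by linarith)
  have hden : (0:ℝ) < (1/d h)*(h:ℝ) := mul_pos hEpos hhp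
  have heq : d h - 2/(h:ℝ) = ((h:ℝ) - 2*(1/d h))/((1/d h)*(h:ℝ)) := by
    field_simp
  rw [heq, abs_div, abs_of_pos hden, div_le_div_iff₀ hden (by positivity)]
  have habs : |(h:ℝ) - 2*(1/d h)| = 2 * |1/d h - (h:ℝ)/2| := by
    rw [← abs_neg]
    rw [show -((h:ℝ) - 2*(1/d h)) = 2 * (1/d h - (h:ℝ)/2) by ring]
    rw [abs_mul, abs_of_nonneg (by norm_num : (0:ℝ) ≤ 2)]
  rw [habs]
  have t2 : (0:ℝ) ≤ Real.log h * (h:ℝ) := by positivity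
  have t1 : 52*(h:ℝ) ≤ 208*(1/d h) := by linarith
  calc 2 * |1/d h - (h:ℝ)/2| * (h:ℝ)^2 ≤ 2 * (26 * Real.log h) * (h:ℝ)^2 := by
        nlinarith [sq_nonneg (h:ℝ)]
    _ = (52*(h:ℝ)) * (Real.log h * (h:ℝ)) := by ring
    _ ≤ (208*(1/d h)) * (Real.log h * (h:ℝ)) := mul_le_mul_of_nonneg_right t1 t2
    _ = 208 * Real.log ↑h * (1/d h * ↑h) := by ring
end

section
/- Let 0 < r < 1 and x > 0, and define the sequence (d_h) by d_0 = x and d_{h+1} = 1 − exp(−r·d_h) for h ≥ 0. Then: (i) 0 ≤ d_h ≤ x·r^h for all h; (ii) the sequence h ↦ r^{−h}·d_h is nonincreasing and converges to a limit θ(r,x) which is strictly positive; (iii) for all h ≥ 0, 0 ≤ r^{−h}·d_h − θ(r,x) ≤ (r·x²/2)·r^h/(1−r). -/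
open Real Filter

lemma exp_neg_le_quad {t : ℝ} (ht : 0 ≤ t) : Real.exp (-t) ≤ 1 - t + t ^ 2 / 2 := by
  have h1 : 1 + t + t ^ 2 / 2 ≤ Real.exp t := Real.quadratic_le_exp_of_nonneg ht
  have h2 : (0:ℝ) < Real.exp t := Real.exp_pos t
  have h3 : Real.exp (-t) = 1 / Real.exp t := by
    rw [Real.exp_neg]; exact (inv_eq_one_div _)
  rw [h3, div_le_iff₀ h2]
  nlinarith [sq_nonneg t, sq_nonneg (t^2)]

/-- Let `0 < r < 1`, `x > 0`, `d 0 = x`,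
`d (h+1) = 1 - exp (-(r * d h))`. Then (i) `0 ≤ d h ≤ x r^h`; (ii) `h ↦ d h / r^h`
is nonincreasing and converges to a strictly positive limit `θ`; (iii)
`0 ≤ d h / r^h - θ ≤ (r x²/2) r^h/(1-r)` for all `h`. -/
theorem stmt_12 (r x : ℝ) (hr0 : 0 < r) (hr1 : r < 1) (hx : 0 < x)
    (d : ℕ → ℝ) (hd0 : d 0 = x)
    (hrec : ∀ h, d (h + 1) = 1 - Real.exp (-(r * d h))) :
    (∀ h, 0 ≤ d h ∧ d h ≤ x * r ^ h) ∧
      Antitone (fun h : ℕ => d h / r ^ h) ∧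
      ∃ θ : ℝ, 0 < θ ∧
        Filter.Tendsto (fun h : ℕ => d h / r ^ h) Filter.atTop (nhds θ) ∧
        ∀ h : ℕ, 0 ≤ d h / r ^ h - θ ∧
          d h / r ^ h - θ ≤ (r * x ^ 2 / 2) * r ^ h / (1 - r) := by
  have hr1' : 0 < 1 - r := by linarith
  -- positivity of d
  have hdpos : ∀ h, 0 < d h := by
    intro h
    induction h with
    | zero => rwa [hd0]
    | succ n ih =>
      rw [hrec n]
      have : Real.exp (-(r * d n)) < 1 := by
        rw [Real.exp_lt_one_iff]
        nlinarith
      linarith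
  -- upper step: d(h+1) ≤ r d h
  have hstepU : ∀ h, d (h + 1) ≤ r * d h := by
    intro h
    rw [hrec h]
    have := Real.add_one_le_exp (-(r * d h))
    linarith
  -- lower step: r d h - (r d h)^2/2 ≤ d (h+1)
  have hstepL : ∀ h, r * d h - (r * d h) ^ 2 / 2 ≤ d (h + 1) := by
    intro h
    rw [hrec h]
    have ht : 0 ≤ r * d h := mul_nonneg hr0.le (hdpos h).le
    have := exp_neg_le_quad ht
    linarith
  -- decay: d (k+n) ≤ d k * r^n
  have hdecay : ∀ k n, d (k + n) ≤ d k * r ^ n := by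
    intro k n
    induction n with
    | zero => simp
    | succ m ih =>
      have := hstepU (k + m)
      have h2 : r * d (k + m) ≤ r * (d k * r ^ m) := by nlinarith
      calc d (k + (m+1)) = d ((k + m) + 1) := by ring_nf
        _ ≤ r * d (k + m) := hstepU _
        _ ≤ r * (d k * r ^ m) := h2
        _ = d k * r ^ (m+1) := by ring
  have hbound : ∀ h, d h ≤ x * r ^ h := by
    intro h
    have := hdecay 0 h
    simpa [hd0] using this
  set a : ℕ → ℝ := fun h : ℕ => d h / r ^ h with ha
  have hrpow : ∀ h : ℕ, (0:ℝ) < r ^ h := fun h => pow_pos hr0 h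
  have hapos : ∀ h, 0 < a h := fun h => div_pos (hdpos h) (hrpow h)
  -- antitone
  have hanti : Antitone a := by
    apply antitone_nat_of_succ_le
    intro n
    have := hstepU n
    rw [ha]
    simp only
    rw [div_le_div_iff₀ (hrpow (n+1)) (hrpow n)]
    have : d (n+1) * r ^ n ≤ r * d n * r ^ n :=
      mul_le_mul_of_nonneg_right this (hrpow n).le
    calc d (n+1) * r ^ n ≤ r * d n * r ^ n := this
      _ = d n * r ^ (n+1) := by ring
  -- one-step gap
  have hgap : ∀ m, a m - a (m + 1) ≤ r * (d m) ^ 2 / (2 * r ^ m) := by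
    intro m
    have hL := hstepL m
    rw [ha]
    simp only
    rw [div_sub_div _ _ (hrpow m).ne' (hrpow (m+1)).ne', div_le_div_iff₀
      (by positivity) (by positivity)]
    have key : r * d m - d (m+1) ≤ (r * d m)^2 / 2 := by nlinarith
    have hint := mul_le_mul_of_nonneg_right key
      (by positivity : (0:ℝ) ≤ 2 * r ^ m * r ^ m)
    have hps : r ^ (m+1) = r ^ m * r := pow_succ r m
    rw [hps]
    nlinarith [hint, hrpow m]
  -- telescoping
  have htel : ∀ k n, a k - a (k + n) ≤ (r * (d k) ^ 2 / (2 * r ^ k)) * ((1 - r ^ n) / (1 - r)) := by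
    intro k n
    induction n with
    | zero => simp
    | succ m ih =>
      have hg := hgap (k + m)
      have hdk : d (k + m) ≤ d k * r ^ m := hdecay k m
      have hd2 : (d (k+m))^2 ≤ (d k)^2 * (r^m)^2 := by
        have h0 := (hdpos (k+m)).le
        nlinarith
      have hg2 : a (k+m) - a (k+m+1) ≤ (r * (d k)^2 / (2 * r ^ k)) * r ^ m := by
        calc a (k+m) - a (k+m+1) ≤ r * (d (k+m))^2 / (2 * r ^ (k+m)) := hg
          _ ≤ (r * (d k)^2 / (2 * r ^ k)) * r ^ m := by
              rw [div_le_iff₀ (by positivity)]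
              have : r ^ (k+m) = r ^ k * r ^ m := pow_add r k m
              have hb : (0:ℝ) < r ^ k := hrpow k
              have hm : (0:ℝ) < r ^ m := hrpow m
              calc r * (d (k+m))^2 ≤ r * ((d k)^2 * (r^m)^2) := by nlinarith
                _ = r * (d k)^2 / (2 * r ^ k) * r ^ m * (2 * r ^ (k + m)) := by
                    rw [pow_add]; field_simp
      have e2 : a k - a (k + (m+1)) = (a k - a (k+m)) + (a (k+m) - a (k+m+1)) := by
        have : k + (m+1) = k + m + 1 := by ring
        rw [this]; ring
      rw [e2]
      have hB : 0 ≤ r * (d k)^2 / (2 * r ^ k) := by positivity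
      have : (1 - r ^ m) / (1 - r) + r ^ m = (1 - r ^ (m+1)) / (1 - r) := by
        field_simp
        ring
      nlinarith [ih, hg2]
  -- limit
  have hbdd : BddBelow (Set.range a) := by
    refine ⟨0, ?_⟩
    rintro y ⟨n, rfl⟩
    exact (hapos n).le
  set θ : ℝ := ⨅ h, a h with hθ
  have htend : Tendsto a atTop (nhds θ) := tendsto_atTop_ciInf hanti hbdd
  have hθle : ∀ h, θ ≤ a h := fun h => ciInf_le hbdd h
  -- θ strictly positive
  have hθpos : 0 < θ := by
    obtain ⟨N, hN⟩ : ∃ N : ℕ, r ^ N < (1 - r) / (r * x) :=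
      exists_pow_lt_of_lt_one (by positivity) hr1
    have hdN : r * d N ≤ 1 - r := by
      have h1 : d N ≤ x * r ^ N := hbound N
      have h2 : r ^ N * (r * x) < 1 - r := by
        rw [← lt_div_iff₀ (by positivity)]; exact hN
      nlinarith
    have hlow : ∀ n, a N / 2 ≤ a (N + n) := by
      intro n
      have ht := htel N n
      have hrn : 0 ≤ 1 - r ^ n := by
        have : r ^ n ≤ 1 := pow_le_one₀ hr0.le hr1.le
        linarith
      have hfrac : (1 - r ^ n) / (1 - r) ≤ 1 / (1 - r) := by
        apply div_le_div_of_nonneg_right _ hr1'.le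
        · have : 0 ≤ r ^ n := (hrpow n).le
          linarith
      have hB : 0 ≤ r * (d N)^2 / (2 * r ^ N) := by positivity
      have key : r * (d N)^2 / (2 * r ^ N) * ((1 - r^n)/(1-r)) ≤ a N / 2 := by
        have haN : a N = d N / r ^ N := rfl
        calc r * (d N)^2 / (2 * r ^ N) * ((1 - r^n)/(1-r))
            ≤ r * (d N)^2 / (2 * r ^ N) * (1/(1-r)) := by
              exact mul_le_mul_of_nonneg_left hfrac hB
          _ ≤ a N / 2 := by
              rw [haN, div_div, div_mul_div_comm,
                div_le_div_iff₀ (by positivity) (by positivity)]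
              nlinarith [hdN, hdpos N, hrpow N, mul_pos (hdpos N) (hrpow N)]
      linarith
    have : a N / 2 ≤ θ := by
      apply ge_of_tendsto htend
      filter_upwards [eventually_ge_atTop N] with m hm
      obtain ⟨n, rfl⟩ := Nat.exists_eq_add_of_le hm
      exact hlow n
    have := hapos N
    linarith
  refine ⟨fun h => ⟨(hdpos h).le, hbound h⟩, hanti, θ, hθpos, htend, fun h => ?_⟩
  constructor
  · have := hθle h
    linarith
  · -- a h - θ ≤ (r x²/2) r^h/(1-r)
    have hlim : Tendsto (fun n : ℕ => a (n + h)) atTop (nhds θ) :=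
      htend.comp (tendsto_add_atTop_nat h)
    have hθge : a h - (r * x ^ 2 / 2) * r ^ h / (1 - r) ≤ θ := by
      apply ge_of_tendsto hlim
      filter_upwards with n
      have ht := htel h n
      rw [Nat.add_comm n h]
      have hdh : (d h)^2 ≤ x^2 * (r^h)^2 := by
        have h1 := hbound h
        have h0 := (hdpos h).le
        nlinarith
      have hB1 : r * (d h)^2 / (2 * r ^ h) ≤ (r * x^2 / 2) * r ^ h := by
        rw [div_le_iff₀ (by positivity)]
        nlinarith [hrpow h]
      have hfrac : (1 - r ^ n) / (1 - r) ≤ 1 / (1 - r) := by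
        apply div_le_div_of_nonneg_right _ hr1'.le
        have : 0 ≤ r ^ n := (hrpow n).le
        linarith
      have hfrac0 : 0 ≤ (1 - r ^ n) / (1 - r) := by
        apply div_nonneg _ hr1'.le
        have : r ^ n ≤ 1 := pow_le_one₀ hr0.le hr1.le
        linarith
      have hB : 0 ≤ r * (d h)^2 / (2 * r ^ h) := by positivity
      have : r * (d h)^2 / (2 * r ^ h) * ((1 - r^n)/(1-r))
          ≤ (r * x^2/2) * r ^ h * (1/(1-r)) :=
        mul_le_mul hB1 hfrac hfrac0 (by positivity)
      have e3 : (r * x^2/2) * r ^ h * (1/(1-r)) = (r * x ^ 2 / 2) * r ^ h / (1 - r) := by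
        ring
      linarith
    linarith
end

section
/- Let 0 < r < 1. For x > 0 define θ(r,x) = lim_{h→∞} r^{−h}·d_h(x), where d_0(x) = x and d_{h+1}(x) = 1 − exp(−r·d_h(x)). Then θ(r,x) > 0 for all x > 0, θ satisfies the Schröder functional equation θ(r, 1 − e^{−r x}) = r·θ(r, x) for all x > 0, and lim_{x→0⁺} θ(r,x)/x = 1. -/
open Real Filter

/-- Let `0 < r < 1`. For `x > 0` let `θ x = lim_h r^{-h} d x h`,
where `d x 0 = x` and `d x (h+1) = 1 - exp (-(r * d x h))`. Then `θ x > 0` for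
all `x > 0`, `θ` satisfies the Schröder equation `θ (1 - e^{-r x}) = r θ x`, and
`θ x / x → 1` as `x → 0⁺`. -/
theorem stmt_13 (r : ℝ) (hr0 : 0 < r) (hr1 : r < 1)
    (d : ℝ → ℕ → ℝ) (hd0 : ∀ x, d x 0 = x)
    (hrec : ∀ x h, d x (h + 1) = 1 - Real.exp (-(r * d x h)))
    (θ : ℝ → ℝ)
    (hθ : ∀ x : ℝ, 0 < x →
      Filter.Tendsto (fun h : ℕ => d x h / r ^ h) Filter.atTop (nhds (θ x))) :
    (∀ x : ℝ, 0 < x → 0 < θ x) ∧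
      (∀ x : ℝ, 0 < x → θ (1 - Real.exp (-(r * x))) = r * θ x) ∧
      Filter.Tendsto (fun x : ℝ => θ x / x) (nhdsWithin 0 (Set.Ioi 0)) (nhds 1) := by
  have hr1' : (0:ℝ) < 1 - r := by linarith
  -- key inequalities
  have key_le : ∀ t : ℝ, 1 - Real.exp (-t) ≤ t := by
    intro t
    have := Real.add_one_le_exp (-t)
    linarith
  have key_ge : ∀ t : ℝ, 0 ≤ t → t * Real.exp (-t) ≤ 1 - Real.exp (-t) := by
    intro t ht
    have h1 := Real.add_one_le_exp t
    have h2 : (0:ℝ) < Real.exp (-t) := Real.exp_pos _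
    have h3 : Real.exp (-t) * Real.exp t = 1 := by
      rw [← Real.exp_add]; simp
    nlinarith [mul_le_mul_of_nonneg_right h1 h2.le]
  -- positivity of d
  have hpos : ∀ x : ℝ, 0 < x → ∀ h, 0 < d x h := by
    intro x hx h
    induction h with
    | zero => simpa [hd0] using hx
    | succ n ih =>
      rw [hrec]
      have : Real.exp (-(r * d x n)) < 1 := by
        rw [Real.exp_lt_one_iff]
        nlinarith
      linarith
  -- upper bound d x h ≤ x * r ^ h
  have hup : ∀ x : ℝ, 0 < x → ∀ h, d x h ≤ x * r ^ h := by
    intro x hx h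
    induction h with
    | zero => simp [hd0]
    | succ n ih =>
      rw [hrec]
      have h1 := key_le (r * d x n)
      have h2 : r * d x n ≤ r * (x * r ^ n) :=
        mul_le_mul_of_nonneg_left ih hr0.le
      calc 1 - Real.exp (-(r * d x n)) ≤ r * d x n := h1
        _ ≤ r * (x * r ^ n) := h2
        _ = x * r ^ (n + 1) := by ring
  -- lower bound with partial sums
  have hlow' : ∀ x : ℝ, 0 < x → ∀ h,
      x * r ^ h * Real.exp (-(∑ k ∈ Finset.range h, x * r ^ k)) ≤ d x h := by
    intro x hx h
    induction h with
    | zero => simp [hd0]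
    | succ n ih =>
      rw [hrec]
      set t := r * d x n with ht
      have hdn := hpos x hx n
      have ht0 : 0 ≤ t := by positivity
      have h1 := key_ge t ht0
      -- d x (n+1) ≥ t * exp (-t) ≥ r * d x n * exp (-(x * r^n))
      have h2 : t ≤ x * r ^ n := by
        have := hup x hx n
        have : r * d x n ≤ r * (x * r ^ n) := mul_le_mul_of_nonneg_left this hr0.le
        nlinarith [pow_pos hr0 n]
      have h3 : Real.exp (-(x * r ^ n)) ≤ Real.exp (-t) :=
        Real.exp_le_exp.mpr (by linarith)
      have h4 : t * Real.exp (-(x * r ^ n)) ≤ 1 - Real.exp (-t) := by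
        have := mul_le_mul_of_nonneg_left h3 ht0
        linarith
      have h5 : r * (x * r ^ n * Real.exp (-(∑ k ∈ Finset.range n, x * r ^ k)))
            * Real.exp (-(x * r ^ n)) ≤ t * Real.exp (-(x * r ^ n)) := by
        have : r * (x * r ^ n * Real.exp (-(∑ k ∈ Finset.range n, x * r ^ k))) ≤ t := by
          have := mul_le_mul_of_nonneg_left ih hr0.le
          linarith
        exact mul_le_mul_of_nonneg_right this (Real.exp_pos _).le
      have hsum : (∑ k ∈ Finset.range (n+1), x * r ^ k)
          = (∑ k ∈ Finset.range n, x * r ^ k) + x * r ^ n := by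
        rw [Finset.sum_range_succ]
      calc x * r ^ (n + 1) * Real.exp (-(∑ k ∈ Finset.range (n+1), x * r ^ k))
          = r * (x * r ^ n * Real.exp (-(∑ k ∈ Finset.range n, x * r ^ k)))
            * Real.exp (-(x * r ^ n)) := by
            rw [hsum, neg_add, Real.exp_add]; ring
        _ ≤ t * Real.exp (-(x * r ^ n)) := h5
        _ ≤ 1 - Real.exp (-t) := h4
  have hlow : ∀ x : ℝ, 0 < x → ∀ h,
      x * r ^ h * Real.exp (-(x / (1 - r))) ≤ d x h := by
    intro x hx h
    refine le_trans ?_ (hlow' x hx h)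
    have hsum : (∑ k ∈ Finset.range h, x * r ^ k) ≤ x / (1 - r) := by
      rw [← Finset.mul_sum]
      rw [geom_sum_eq (by linarith : r ≠ 1)]
      have h1 : (r ^ h - 1) / (r - 1) = (1 - r ^ h) / (1 - r) := by
        rw [div_eq_div_iff (by linarith) (by linarith : (1:ℝ) - r ≠ 0)]; ring
      rw [h1, ← mul_div_assoc, div_le_div_iff₀ hr1' hr1']
      nlinarith [mul_pos (mul_pos hx (pow_pos hr0 h)) hr1']
    have := Real.exp_le_exp.mpr (neg_le_neg hsum)
    have hxr : 0 ≤ x * r ^ h := by positivity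
    exact mul_le_mul_of_nonneg_left this hxr
  -- bounds on θ
  have hθlow : ∀ x : ℝ, 0 < x → x * Real.exp (-(x / (1 - r))) ≤ θ x := by
    intro x hx
    refine ge_of_tendsto (hθ x hx) (Filter.Eventually.of_forall fun h => ?_)
    rw [le_div_iff₀ (pow_pos hr0 h)]
    calc x * Real.exp (-(x / (1 - r))) * r ^ h
        = x * r ^ h * Real.exp (-(x / (1 - r))) := by ring
      _ ≤ d x h := hlow x hx h
  have hθup : ∀ x : ℝ, 0 < x → θ x ≤ x := by
    intro x hx
    refine le_of_tendsto (hθ x hx) (Filter.Eventually.of_forall fun h => ?_)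
    rw [div_le_iff₀ (pow_pos hr0 h)]
    exact hup x hx h
  refine ⟨fun x hx => lt_of_lt_of_le (by positivity) (hθlow x hx), ?_, ?_⟩
  · -- Schröder equation
    intro x hx
    have hfx : 0 < 1 - Real.exp (-(r * x)) := by
      have : Real.exp (-(r * x)) < 1 := by
        rw [Real.exp_lt_one_iff]; nlinarith
      linarith
    have hshift : ∀ h, d (1 - Real.exp (-(r * x))) h = d x (h + 1) := by
      intro h
      induction h with
      | zero => rw [hd0, hrec, hd0]
      | succ n ih => rw [hrec, ih, hrec x (n+1)]
    have t1 : Filter.Tendsto (fun h : ℕ => d x (h + 1) / r ^ (h + 1))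
        Filter.atTop (nhds (θ x)) :=
      (hθ x hx).comp (Filter.tendsto_add_atTop_nat 1)
    have t2 : Filter.Tendsto (fun h : ℕ => d (1 - Real.exp (-(r * x))) h / r ^ h)
        Filter.atTop (nhds (r * θ x)) := by
      have := t1.const_mul r
      refine this.congr fun h => ?_
      rw [hshift h, pow_succ]
      field_simp
    exact tendsto_nhds_unique (hθ _ hfx) t2
  · -- limit at 0+
    have tlo : Filter.Tendsto (fun x : ℝ => Real.exp (-(x / (1 - r))))
        (nhdsWithin 0 (Set.Ioi 0)) (nhds 1) := by
      have hc : Continuous fun x : ℝ => Real.exp (-(x / (1 - r))) := by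
        continuity
      have h2 : Filter.Tendsto (fun x : ℝ => Real.exp (-(x / (1 - r))))
          (nhdsWithin 0 (Set.Ioi 0)) (nhds (Real.exp (-(0 / (1 - r))))) :=
        (hc.tendsto 0).mono_left nhdsWithin_le_nhds
      simpa using h2
    refine tendsto_of_tendsto_of_tendsto_of_le_of_le' tlo tendsto_const_nhds ?_ ?_
    · filter_upwards [self_mem_nhdsWithin] with x hx
      have hx' : (0:ℝ) < x := hx
      rw [le_div_iff₀ hx']
      have := hθlow x hx'
      linarith [hθlow x hx']
    · filter_upwards [self_mem_nhdsWithin] with x hx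
      have hx' : (0:ℝ) < x := hx
      rw [div_le_one hx']
      exact hθup x hx'
end

section
/- For every real u ≥ 1, letting n₀ = ⌈e·u⌉, the Poisson-type tail satisfies Σ_{k=n₀+1}^∞ u^k/k! ≤ √(e·u)/((e−1)·√(2π)). -/
/-! The first term `uⁿ/n!` of the tail, `n = ⌈e u⌉`, is at most `1/√(2πn)` by Stirling's lower
bound `√(2πn) (n/e)ⁿ ≤ n!`, since `u ≤ n/e`. Each further term is at most `u/(n+1) ≤ 1/e` times
the previous one, so the tail is dominated by a geometric series of ratio `1/e`, whose sum is
`1/(e-1)` times the first term. -/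

open Real Nat

lemma pow_div_factorial_add_le {u : ℝ} (hu : 0 ≤ u) (n k : ℕ) :
    u ^ (n + k) / (n + k)! ≤ u ^ n / n ! * (u / (n + 1)) ^ k := by
  have hfac : (n ! : ℝ) * (n + 1) ^ k ≤ (n + k)! := mod_cast factorial_mul_pow_le_factorial
  calc u ^ (n + k) / (n + k)! ≤ u ^ n * u ^ k / (n ! * (n + 1) ^ k) := by
        rw [pow_add]; gcongr
    _ = u ^ n / n ! * (u / (n + 1)) ^ k := by rw [div_pow]; field_simp

lemma pow_div_factorial_le_inv_sqrt {u : ℝ} (hu : 0 ≤ u) {n : ℕ} (hn : n ≠ 0)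
    (h : exp 1 * u ≤ n) : u ^ n / n ! ≤ (√(2 * π * n))⁻¹ := by
  have hun : u ≤ n / exp 1 := by rw [le_div_iff₀ (exp_pos 1)]; linarith
  have hpos : 0 < √(2 * π * n) * (n / exp 1) ^ n := by
    have : (0 : ℝ) < n := by positivity
    positivity
  calc u ^ n / n ! ≤ (n / exp 1) ^ n / (√(2 * π * n) * (n / exp 1) ^ n) := by
        gcongr
        exact Stirling.le_factorial_stirling n
    _ = (√(2 * π * n))⁻¹ := by field_simp

lemma hasSum_inv_exp_one_pow_succ :
    HasSum (fun k : ℕ => (exp 1)⁻¹ ^ (k + 1)) (exp 1 - 1)⁻¹ := by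
  have hr : (exp 1)⁻¹ < 1 := inv_lt_one_of_one_lt₀ (by linarith [exp_one_gt_two])
  have h := (hasSum_geometric_of_lt_one (by positivity) hr).mul_left (exp 1)⁻¹
  have he : exp 1 - 1 ≠ 0 := by linarith [exp_one_gt_two]
  rw [show (exp 1 - 1)⁻¹ = (exp 1)⁻¹ * (1 - (exp 1)⁻¹)⁻¹ by field_simp]
  simpa only [_root_.pow_succ'] using h

lemma tsum_pow_div_factorial_tail_le {u : ℝ} (hu : 0 ≤ u) {n : ℕ} (h : exp 1 * u ≤ n + 1) :
    ∑' k : ℕ, u ^ (k + n + 1) / (k + n + 1)! ≤ u ^ n / n ! / (exp 1 - 1) := by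
  have hratio : u / (n + 1) ≤ (exp 1)⁻¹ := by
    rw [div_le_iff₀ (by positivity), inv_mul_eq_div, le_div_iff₀ (exp_pos 1)]; linarith
  have hterm (k : ℕ) : u ^ (k + n + 1) / (k + n + 1)! ≤ u ^ n / n ! * (exp 1)⁻¹ ^ (k + 1) :=
    calc u ^ (k + n + 1) / (k + n + 1)! = u ^ (n + (k + 1)) / (n + (k + 1))! := by
          rw [show k + n + 1 = n + (k + 1) by omega]
      _ ≤ u ^ n / n ! * (u / (n + 1)) ^ (k + 1) := by
          exact_mod_cast pow_div_factorial_add_le hu n (k + 1)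
      _ ≤ u ^ n / n ! * (exp 1)⁻¹ ^ (k + 1) := by gcongr
  have htail : Summable fun k : ℕ => u ^ (k + n + 1) / (k + n + 1)! :=
    (summable_nat_add_iff (n + 1)).mpr (summable_pow_div_factorial u)
  exact hasSum_le hterm htail.hasSum (hasSum_inv_exp_one_pow_succ.mul_left _)

/-- For every real `u ≥ 1`, with `n₀ = ⌈e u⌉`, the Poisson-type
tail satisfies `Σ_{k = n₀+1}^∞ u^k/k! ≤ √(e u)/((e-1) √(2π))`. -/
theorem stmt_15 (u : ℝ) (hu : 1 ≤ u) :
    (∑' k : ℕ,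
        u ^ (k + Nat.ceil (Real.exp 1 * u) + 1) /
          Nat.factorial (k + Nat.ceil (Real.exp 1 * u) + 1)) ≤
      Real.sqrt (Real.exp 1 * u) / ((Real.exp 1 - 1) * Real.sqrt (2 * Real.pi)) := by
  set n := ⌈exp 1 * u⌉₊
  have hu0 : 0 ≤ u := zero_le_one.trans hu
  have hceil : exp 1 * u ≤ n := le_ceil _
  have hn : n ≠ 0 := (ceil_pos.mpr (by positivity)).ne'
  have he : 0 < exp 1 - 1 := by linarith [exp_one_gt_two]
  have hhead : u ^ n / n ! ≤ √(exp 1 * u) / √(2 * π) := calc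
    u ^ n / n ! ≤ (√(2 * π * n))⁻¹ := pow_div_factorial_le_inv_sqrt hu0 hn hceil
    _ ≤ (√(2 * π))⁻¹ := inv_anti₀ (by positivity) (sqrt_le_sqrt
      (le_mul_of_one_le_right (by positivity) (one_le_cast.mpr (pos_of_ne_zero hn))))
    _ ≤ √(exp 1 * u) / √(2 * π) := by
      rw [inv_eq_one_div]
      gcongr
      exact one_le_sqrt.mpr (by nlinarith [exp_one_gt_two])
  calc _ ≤ u ^ n / n ! / (exp 1 - 1) := tsum_pow_div_factorial_tail_le hu0 (by linarith)
    _ ≤ √(exp 1 * u) / √(2 * π) / (exp 1 - 1) := by gcongr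
    _ = _ := by rw [div_div, mul_comm (√(2 * π))]
end

section
/- Let C be a finite set and let ρ_{cc'} ≥ 0 for c, c' ∈ C, with row sums ρ_c = Σ_{c'∈C} ρ_{cc'}. If ρ_c ≤ 1/e for every c ∈ C, then the nonlinear system y_c = Σ_{c'∈C} ρ_{cc'}·exp(y_{c'}) (c ∈ C) has a real-valued solution y with 0 ≤ y_c ≤ e·ρ_c for all c ∈ C. -/
open Filter Topology

/-- Let `C` be finite, `ρ c c' ≥ 0`, with row sums
`ρ_c = Σ_{c'} ρ c c'`. If `ρ_c ≤ 1/e` for every `c`, then the system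
`y c = Σ_{c'} ρ c c' * exp (y c')` has a solution with `0 ≤ y c ≤ e ρ_c`. -/
theorem stmt_16 {C : Type*} [Fintype C] (ρ : C → C → ℝ)
    (hρ : ∀ c c', 0 ≤ ρ c c')
    (hrow : ∀ c, (∑ c', ρ c c') ≤ (Real.exp 1)⁻¹) :
    ∃ y : C → ℝ, (∀ c, y c = ∑ c', ρ c c' * Real.exp (y c')) ∧
      ∀ c, 0 ≤ y c ∧ y c ≤ Real.exp 1 * ∑ c', ρ c c' := by
  classical
  set F : (C → ℝ) → (C → ℝ) := fun y c => ∑ c', ρ c c' * Real.exp (y c') with hF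
  have Fmono : ∀ x y : C → ℝ, (∀ c, x c ≤ y c) → ∀ c, F x c ≤ F y c := by
    intro x y h c
    exact Finset.sum_le_sum fun c' _ =>
      mul_le_mul_of_nonneg_left (Real.exp_le_exp.2 (h c')) (hρ c c')
  have Fnonneg : ∀ (x : C → ℝ) c, 0 ≤ F x c := fun x c =>
    Finset.sum_nonneg fun c' _ => mul_nonneg (hρ c c') (Real.exp_pos _).le
  have Fle1 : ∀ x : C → ℝ, (∀ c, x c ≤ 1) → ∀ c, F x c ≤ 1 := by
    intro x hx c
    calc F x c ≤ ∑ c', ρ c c' * Real.exp 1 :=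
          Finset.sum_le_sum fun c' _ =>
            mul_le_mul_of_nonneg_left (Real.exp_le_exp.2 (hx c')) (hρ c c')
    _ = (∑ c', ρ c c') * Real.exp 1 := by rw [← Finset.sum_mul]
    _ ≤ (Real.exp 1)⁻¹ * Real.exp 1 :=
          mul_le_mul_of_nonneg_right (hrow c) (Real.exp_pos 1).le
    _ = 1 := inv_mul_cancel₀ (Real.exp_ne_zero 1)
  set u : ℕ → C → ℝ := fun n => F^[n] 0 with hu
  have hu_succ : ∀ n, u (n + 1) = F (u n) := fun n => Function.iterate_succ_apply' F n 0
  have hmono : ∀ n c, u n c ≤ u (n + 1) c := by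
    intro n
    induction n with
    | zero => intro c; rw [hu_succ]; exact Fnonneg _ c
    | succ n ih => intro c; rw [hu_succ, hu_succ]; exact Fmono _ _ ih c
  have hle1 : ∀ n c, u n c ≤ 1 := by
    intro n
    induction n with
    | zero => intro c; simp [hu]
    | succ n ih => intro c; rw [hu_succ]; exact Fle1 _ ih c
  have hmono' : ∀ c, Monotone fun n => u n c := fun c =>
    monotone_nat_of_le_succ fun n => hmono n c
  have hbdd : ∀ c, BddAbove (Set.range fun n => u n c) :=
    fun c => ⟨1, by rintro _ ⟨n, rfl⟩; exact hle1 n c⟩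
  set y : C → ℝ := fun c => ⨆ n, u n c with hy
  have htend : ∀ c, Tendsto (fun n => u n c) atTop (𝓝 (y c)) :=
    fun c => tendsto_atTop_ciSup (hmono' c) (hbdd c)
  have hyle1 : ∀ c, y c ≤ 1 := fun c => ciSup_le fun n => hle1 n c
  have hynn : ∀ c, 0 ≤ y c := fun c => le_ciSup_of_le (hbdd c) 0 (by simp [hu])
  have hfix : ∀ c, y c = F y c := by
    intro c
    have h1 : Tendsto (fun n => u (n + 1) c) atTop (𝓝 (y c)) :=
      (htend c).comp (tendsto_add_atTop_nat 1)
    have h2 : Tendsto (fun n => F (u n) c) atTop (𝓝 (F y c)) := by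
      apply tendsto_finset_sum
      intro c' _
      exact ((Real.continuous_exp.tendsto _).comp (htend c')).const_mul _
    simp_rw [hu_succ] at h1
    exact tendsto_nhds_unique h1 h2
  refine ⟨y, fun c => hfix c, fun c => ⟨hynn c, ?_⟩⟩
  calc y c = F y c := hfix c
    _ ≤ ∑ c', ρ c c' * Real.exp 1 := Finset.sum_le_sum fun c' _ =>
        mul_le_mul_of_nonneg_left (Real.exp_le_exp.2 (hyle1 c')) (hρ c c')
    _ = Real.exp 1 * ∑ c', ρ c c' := by rw [← Finset.sum_mul, mul_comm]
end

section
/- Let C be a finite set and ρ_{cc'} ≥ 0 for c, c' ∈ C. Suppose the system y_c = Σ_{c'∈C} ρ_{cc'}·exp(y_{c'}) has a real-valued solution (y_c). Then the vector x with x_c = exp(y_c) is strictly positive and satisfies Σ_{c'∈C} ρ_{cc'}·x_{c'} ≤ x_c/e for every c ∈ C; consequently every complex eigenvalue of the matrix (ρ_{cc'})_{c,c'∈C} has modulus at most 1/e. In particular the Perron–Frobenius eigenvalue ρ of this nonnegative matrix satisfies ρ ≤ 1/e. -/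
/-!
Since `t ≤ e^{t-1}` for every real `t`, a solution satisfies `y_c ≤ e^{y_c} / e`, i.e. the positive
vector `x = exp ∘ y` is a subsolution `ρ x ≤ x / e`. For a nonnegative matrix `A` and a positive
vector `x` with `A x ≤ r x`, every complex eigenvalue `μ` has `|μ| ≤ r`: at the coordinate `i` where
`|v_i| / x_i` is maximal for an eigenvector `v`, the triangle inequality gives
`|μ| |v_i| ≤ ∑_j A_ij |v_j| ≤ (|v_i| / x_i) (A x)_i ≤ r |v_i|`.
-/

open Finset

lemma Real.le_exp_div_exp_one (t : ℝ) : t ≤ Real.exp t / Real.exp 1 := by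
  rw [← Real.exp_sub]
  linarith [Real.add_one_le_exp (t - 1)]

namespace Matrix

variable {n : Type*} [Fintype n]

lemma norm_map_ofReal_mulVec_le {A : Matrix n n ℝ} (hA : ∀ i j, 0 ≤ A i j) (v : n → ℂ) (i : n) :
    ‖(A.map Complex.ofReal *ᵥ v) i‖ ≤ ∑ j, A i j * ‖v j‖ := by
  simp only [mulVec, dotProduct, map_apply]
  refine (norm_sum_le _ _).trans_eq (sum_congr rfl fun j _ => ?_)
  rw [norm_mul, Complex.norm_real, Real.norm_of_nonneg (hA i j)]

variable [DecidableEq n]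

lemma exists_mulVec_eq_smul_of_mem_spectrum {K : Type*} [Field K] {A : Matrix n n K} {μ : K}
    (hμ : μ ∈ spectrum K A) : ∃ v ≠ 0, A *ᵥ v = μ • v := by
  rw [← spectrum_toLin', ← Module.End.hasEigenvalue_iff_mem_spectrum] at hμ
  obtain ⟨v, hv⟩ := hμ.exists_hasEigenvector
  exact ⟨v, hv.2, hv.apply_eq_smul⟩

theorem norm_le_of_mem_spectrum_of_mulVec_le {A : Matrix n n ℝ} (hA : ∀ i j, 0 ≤ A i j)
    {x : n → ℝ} (hx : ∀ i, 0 < x i) {r : ℝ} (hAx : ∀ i, (A *ᵥ x) i ≤ r * x i) {μ : ℂ}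
    (hμ : μ ∈ spectrum ℂ (A.map Complex.ofReal)) : ‖μ‖ ≤ r := by
  obtain ⟨v, hv0, hv⟩ := exists_mulVec_eq_smul_of_mem_spectrum hμ
  obtain ⟨i, hi⟩ := Function.ne_iff.mp hv0
  obtain ⟨i₀, -, hmax⟩ := exists_max_image univ (fun j => ‖v j‖ / x j) ⟨i, mem_univ i⟩
  set M := ‖v i₀‖ / x i₀
  have hM : 0 < M := (div_pos (norm_pos_iff.mpr hi) (hx i)).trans_le (hmax i (mem_univ i))
  have hvM : ∀ j, ‖v j‖ ≤ M * x j := fun j => (div_le_iff₀ (hx j)).mp (hmax j (mem_univ j))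
  have key : ‖μ‖ * (M * x i₀) ≤ r * (M * x i₀) := calc
    ‖μ‖ * (M * x i₀) = ‖(A.map Complex.ofReal *ᵥ v) i₀‖ := by
      rw [hv, Pi.smul_apply, smul_eq_mul, norm_mul, div_mul_cancel₀ _ (hx i₀).ne']
    _ ≤ ∑ j, A i₀ j * ‖v j‖ := norm_map_ofReal_mulVec_le hA v i₀
    _ ≤ ∑ j, A i₀ j * (M * x j) :=
      sum_le_sum fun j _ => mul_le_mul_of_nonneg_left (hvM j) (hA i₀ j)
    _ = M * (A *ᵥ x) i₀ := by
      rw [mulVec, dotProduct, mul_sum]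
      exact sum_congr rfl fun j _ => by ring
    _ ≤ M * (r * x i₀) := mul_le_mul_of_nonneg_left (hAx i₀) hM.le
    _ = r * (M * x i₀) := by ring
  exact le_of_mul_le_mul_right key (mul_pos hM (hx i₀))

end Matrix

/-- Let `C` be finite, `ρ c c' ≥ 0`, and suppose
`y c = Σ_{c'} ρ c c' * exp (y c')` has a real solution `y`. Then
`x c = exp (y c)` is strictly positive and `Σ_{c'} ρ c c' * x c' ≤ x c / e`
for every `c`; consequently every complex eigenvalue of `(ρ c c')` has modulus
at most `1/e` (in particular the Perron–Frobenius eigenvalue is `≤ 1/e`). -/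
theorem stmt_18 {C : Type*} [Fintype C] [DecidableEq C] (ρ : C → C → ℝ)
    (hρ : ∀ c c', 0 ≤ ρ c c')
    (y : C → ℝ) (hy : ∀ c, y c = ∑ c', ρ c c' * Real.exp (y c')) :
    (∀ c, 0 < Real.exp (y c)) ∧
      (∀ c, (∑ c', ρ c c' * Real.exp (y c')) ≤ Real.exp (y c) / Real.exp 1) ∧
      ∀ μ ∈ spectrum ℂ (Matrix.of fun c c' : C => (ρ c c' : ℂ)),
        ‖μ‖ ≤ (Real.exp 1)⁻¹ := by
  have hsub : ∀ c, ∑ c', ρ c c' * Real.exp (y c') ≤ Real.exp (y c) / Real.exp 1 := fun c => by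
    rw [← hy c]
    exact Real.le_exp_div_exp_one (y c)
  refine ⟨fun c => Real.exp_pos (y c), hsub, fun μ hμ => ?_⟩
  refine Matrix.norm_le_of_mem_spectrum_of_mulVec_le (A := Matrix.of ρ) hρ
    (x := fun c => Real.exp (y c)) (fun c => Real.exp_pos (y c)) (fun c => ?_) hμ
  rw [inv_mul_eq_div]
  exact hsub c
end
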